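/- The function H_1(y) = h_1^{-1}(y)/y is strictly decreasing for y > 0, where h_1(x) = x·tanh(x) maps (0, ∞) bijectively onto (0, ∞). -/

import Mathlib

/-! Since `h₁(x) / x = tanh x`, we have `H₁(y) = 1 / tanh (h₁⁻¹ y)`. The inverse of the increasing
map `h₁` is increasing and `tanh` is positive and increasing on `(0, ∞)`, so `H₁` decreases. -/

open Set

theorem Set.RightInvOn.strictMonoOn_of_monotoneOn {α β : Type*} [LinearOrder α] [Preorder β]
    {f : α → β} {g : β → α} {s : Set α} {t : Set β} (hf : MonotoneOn f s) (hg : MapsTo g t s)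
    (hfg : RightInvOn g f t) : StrictMonoOn g t := by
  intro a ha b hb hab
  by_contra! hba
  have : f (g b) ≤ f (g a) := hf (hg hb) (hg ha) hba
  rw [hfg ha, hfg hb] at this
  exact hab.not_ge this

namespace Real

theorem tanh_strictMono : StrictMono tanh := fun u v huv => by
  rwa [← strictMonoOn_artanh.lt_iff_lt ⟨neg_one_lt_tanh u, tanh_lt_one u⟩
    ⟨neg_one_lt_tanh v, tanh_lt_one v⟩, artanh_tanh, artanh_tanh]

theorem tanh_pos {x : ℝ} (hx : 0 < x) : 0 < tanh x :=
  tanh_zero ▸ tanh_strictMono hx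

theorem strictMonoOn_mul_tanh : StrictMonoOn (fun x => x * tanh x) (Ioi 0) :=
  fun _ hu _ _ huv => mul_lt_mul'' huv (tanh_strictMono huv) hu.le (tanh_pos hu).le

theorem strictAntiOn_inv_tanh : StrictAntiOn (fun x => (tanh x)⁻¹) (Ioi 0) :=
  fun _ hu _ _ huv =>
    (inv_lt_inv₀ (tanh_pos (hu.trans huv)) (tanh_pos hu)).2 (tanh_strictMono huv)

end Real

theorem H1_strictAnti_general (hinv : ℝ → ℝ)
    (h_right : ∀ y ∈ Set.Ioi (0:ℝ),
      hinv y > 0 ∧ hinv y * Real.tanh (hinv y) = y) :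
    StrictAntiOn (fun y => hinv y / y) (Set.Ioi 0) := by
  have hmaps : MapsTo hinv (Ioi 0) (Ioi 0) := fun y hy => (h_right y hy).1
  have hinv_mono : StrictMonoOn hinv (Ioi 0) :=
    RightInvOn.strictMonoOn_of_monotoneOn Real.strictMonoOn_mul_tanh.monotoneOn hmaps
      fun y hy => (h_right y hy).2
  refine (Real.strictAntiOn_inv_tanh.comp_strictMonoOn hinv_mono hmaps).congr fun y hy => ?_
  obtain ⟨hpos, hinv_y⟩ := h_right y hy
  calc (Real.tanh (hinv y))⁻¹ = hinv y / (hinv y * Real.tanh (hinv y)) :=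
        (div_mul_cancel_left₀ hpos.ne' _).symm
    _ = hinv y / y := by rw [hinv_y]

/-- `h₁(x) = x·tanh x` maps `(0, ∞)` bijectively onto `(0, ∞)`; `hinv` is its inverse.
The function `H₁(y) = h₁⁻¹(y)/y` is strictly decreasing on `(0, ∞)`. -/
theorem H1_strictAnti (hinv : ℝ → ℝ)
    (h_left : ∀ x > (0:ℝ), hinv (x * Real.tanh x) = x)
    (h_right : ∀ y ∈ Set.Ioi (0:ℝ),
      hinv y > 0 ∧ hinv y * Real.tanh (hinv y) = y) :
    StrictAntiOn (fun y => hinv y / y) (Set.Ioi 0) :=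
  H1_strictAnti_general hinv h_right
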